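/- arXiv:quant-ph/0503013 — 4 statements merged into one kernel-verified Lean document; each statement's English description precedes it below -/
import Mathlib

section
/- Let M be a p × n matrix over Z/DZ (D ≥ 2). The rows of M form a linearly independent family (i.e., the only vector c ∈ (Z/DZ)^p with c^T M = 0 is c = 0) if and only if the gcd over the integers of all p × p minors of M (together with D) equals 1. -/
/-!
If `c ᵥ* M = 0`, multiplying by adjugates shows that every maximal minor annihilates `c`; so
does `D`, hence so does their gcd, and `c = 0` when that gcd is `1`. Conversely, if a prime `q`
divides `D` and all maximal minors, then the reduction of `M` modulo `q` has dependent rows,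
since over a field independent rows admit a nonsingular maximal minor (take a basis among the
columns). A dependence modulo `q`, lifted and multiplied by `D / q`, is a nonzero dependence
modulo `D`.
-/

open Matrix

theorem Matrix.linearIndependent_rows_iff_forall_vecMul_eq_zero {R m n : Type*} [CommRing R]
    [Fintype m] {M : Matrix m n R} :
    LinearIndependent R M.row ↔ ∀ c : m → R, c ᵥ* M = 0 → c = 0 := by
  rw [← vecMul_injective_iff, ← coe_vecMulLinear, injective_iff_map_eq_zero]
  rfl

theorem Matrix.exists_det_submatrix_ne_zero_of_linearIndependent_rows {K m n : Type*} [Field K]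
    [Fintype m] [DecidableEq m] [Fintype n] {A : Matrix m n K} (h : LinearIndependent K A.row) :
    ∃ f : m → n, (A.submatrix id f).det ≠ 0 := by
  have hspan : Submodule.span K (Set.range A.col) = ⊤ := by
    apply Submodule.eq_top_of_finrank_eq
    rw [← rank_eq_finrank_span_cols, h.rank_matrix, Module.finrank_fintype_fun_eq_card]
  obtain ⟨κ, a, -, hspan', hli⟩ := exists_linearIndependent' K A.col
  let b : Module.Basis κ K (m → K) := .mk hli (by rw [hspan', hspan])
  let e : m ≃ κ := (Pi.basisFun K m).indexEquiv b
  refine ⟨a ∘ e, (isUnit_iff_isUnit_det _).mp ?_ |>.ne_zero⟩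
  exact linearIndependent_cols_iff_isUnit.mp (hli.comp e e.injective)

theorem Matrix.det_submatrix_smul_eq_zero_of_vecMul_eq_zero {R m n : Type*} [CommRing R]
    [Fintype m] [DecidableEq m] {A : Matrix m n R} {c : m → R} (hc : c ᵥ* A = 0)
    (f : m → n) : (A.submatrix id f).det • c = 0 := by
  have hsub : c ᵥ* A.submatrix id f = 0 := funext fun j => congr_fun hc (f j)
  calc (A.submatrix id f).det • c = c ᵥ* ((A.submatrix id f).det • 1) := by
        rw [vecMul_smul, vecMul_one]
    _ = 0 := by rw [← mul_adjugate, ← vecMul_vecMul, hsub, zero_vecMul]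

theorem natCast_mul_eq_zero_iff_addOrderOf_dvd {R : Type*} [NonAssocSemiring R] (k : ℕ) (y : R) :
    (k : R) * y = 0 ↔ addOrderOf y ∣ k := by
  rw [← nsmul_eq_mul, addOrderOf_dvd_iff_nsmul_eq_zero]

namespace ZMod

variable {m n : Type*} [Fintype m] {D : ℕ} [NeZero D]

theorem natCast_div_mul_eq_zero_iff {q : ℕ} (hq : q ∣ D) (y : ZMod D) :
    ((D / q : ℕ) : ZMod D) * y = 0 ↔ castHom hq (ZMod q) y = 0 := by
  have hq0 : 0 < D / q := Nat.div_pos (Nat.le_of_dvd (NeZero.pos D) hq)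
    (Nat.pos_of_dvd_of_pos hq (NeZero.pos D))
  rw [castHom_apply, cast_eq_val, ← natCast_zmod_val y, ← Nat.cast_mul, natCast_eq_zero_iff,
    natCast_zmod_val, natCast_eq_zero_iff]
  calc D ∣ D / q * y.val ↔ D / q * q ∣ D / q * y.val := by rw [Nat.div_mul_cancel hq]
    _ ↔ q ∣ y.val := Nat.mul_dvd_mul_iff_left hq0

theorem linearIndependent_rows_map_castHom {q : ℕ} (hq : q ∣ D) {M : Matrix m n (ZMod D)}
    (h : LinearIndependent (ZMod D) M.row) :
    LinearIndependent (ZMod q) (M.map (castHom hq (ZMod q))).row := by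
  have : NeZero q := ⟨fun hq0 => NeZero.ne D (Nat.eq_zero_of_zero_dvd (hq0 ▸ hq))⟩
  set π := castHom hq (ZMod q)
  rw [linearIndependent_rows_iff_forall_vecMul_eq_zero] at h ⊢
  intro c hc
  set c₀ : m → ZMod D := fun i => (c i).val
  have hlift : π ∘ c₀ = c := funext fun i => by simp [c₀, π]
  have hscaled : ((D / q : ℕ) : ZMod D) • c₀ = 0 := by
    refine h _ (funext fun j => ?_)
    rw [smul_vecMul, Pi.smul_apply, smul_eq_mul, Pi.zero_apply,
      natCast_div_mul_eq_zero_iff hq, RingHom.map_vecMul, hlift]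
    exact congr_fun hc j
  rw [← hlift]
  exact funext fun i => (natCast_div_mul_eq_zero_iff hq _).mp (congr_fun hscaled i)

theorem linearIndependent_rows_iff_gcd_det_submatrix_eq_one [DecidableEq m] [Fintype n]
    {M : Matrix m n (ZMod D)} :
    LinearIndependent (ZMod D) M.row ↔
      Nat.gcd (Finset.univ.gcd fun f : m → n => (M.submatrix id f).det.val) D = 1 := by
  constructor
  · intro h
    by_contra hG
    obtain ⟨q, hq, hqG⟩ := Nat.exists_prime_and_dvd hG
    have : Fact q.Prime := ⟨hq⟩
    obtain ⟨f, hf⟩ := exists_det_submatrix_ne_zero_of_linearIndependent_rows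
      (linearIndependent_rows_map_castHom (hqG.trans (Nat.gcd_dvd_right _ _)) h)
    apply hf
    rw [submatrix_map, ← RingHom.mapMatrix_apply, ← RingHom.map_det, castHom_apply,
      cast_eq_val, natCast_eq_zero_iff]
    exact hqG.trans ((Nat.gcd_dvd_left _ _).trans (Finset.gcd_dvd (Finset.mem_univ f)))
  · intro h
    rw [linearIndependent_rows_iff_forall_vecMul_eq_zero]
    intro c hc
    funext i
    have hminor (f : m → n) : addOrderOf (c i) ∣ (M.submatrix id f).det.val := by
      rw [← natCast_mul_eq_zero_iff_addOrderOf_dvd, natCast_zmod_val]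
      exact congr_fun (det_submatrix_smul_eq_zero_of_vecMul_eq_zero hc f) i
    have hD : addOrderOf (c i) ∣ D := by
      rw [← natCast_mul_eq_zero_iff_addOrderOf_dvd, natCast_self, zero_mul]
    have hone := h ▸ Nat.dvd_gcd (Finset.dvd_gcd fun f _ => hminor f) hD
    exact AddMonoid.addOrderOf_eq_one_iff.mp (Nat.dvd_one.mp hone)

end ZMod

/-- The rows of a `p × n` matrix over `ZMod D` are linearly independent iff the
gcd (over the integers) of all its `p × p` minors together with `D` is 1. -/
theorem stmt6 (D p n : ℕ) (hD : 2 ≤ D) (M : Matrix (Fin p) (Fin n) (ZMod D)) :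
    (∀ c : Fin p → ZMod D, Matrix.vecMul c M = 0 → c = 0) ↔
    Nat.gcd
      (Finset.univ.gcd fun f : Fin p → Fin n => ((M.submatrix id f).det).val)
      D = 1 := by
  have : NeZero D := ⟨by omega⟩
  rw [← linearIndependent_rows_iff_forall_vecMul_eq_zero]
  exact ZMod.linearIndependent_rows_iff_gcd_det_submatrix_eq_one
end

section
/- Any linearly independent family of k vectors in (Z/DZ)^n (k ≤ n) can be extended to a family of n vectors forming a basis of (Z/DZ)^n as a Z/DZ-module. -/
/-!
Multiplying a relation by `D / p` shows that a family that is linearly independent over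
`ZMod D` stays linearly independent modulo every prime `p ∣ D`. Over the field `ZMod p` the
reduced family extends to a basis, and the Chinese remainder theorem lifts these extensions,
for all prime divisors at once, to a square matrix over `ZMod D` extending the family. Its
determinant is nonzero modulo every prime divisor of `D`, hence a unit, so its rows form a basis.
-/

theorem ZMod.natCast_div_mul_eq_zero_iff_s7 {D p : ℕ} [NeZero D] (hp : p ∣ D) (x : ZMod D) :
    ((D / p : ℕ) : ZMod D) * x = 0 ↔ ZMod.castHom hp (ZMod p) x = 0 := by
  have hp0 : 0 < p := Nat.pos_of_dvd_of_pos hp (NeZero.pos D)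
  have hDp : 0 < D / p := Nat.div_pos (Nat.le_of_dvd (NeZero.pos D) hp) hp0
  rw [← ZMod.natCast_zmod_val x, map_natCast, ← Nat.cast_mul, ZMod.natCast_eq_zero_iff,
    ZMod.natCast_eq_zero_iff]
  simpa only [Nat.div_mul_cancel hp] using Nat.mul_dvd_mul_iff_left hDp (b := p) (c := x.val)

theorem LinearIndependent.castHom_comp {ι σ : Type*} [Fintype ι] {D p : ℕ} [NeZero D]
    (hp : p ∣ D) {v : ι → σ → ZMod D} (hv : LinearIndependent (ZMod D) v) :
    LinearIndependent (ZMod p) fun i => ZMod.castHom hp (ZMod p) ∘ v i := by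
  have : NeZero p := ⟨(Nat.pos_of_dvd_of_pos hp (NeZero.pos D)).ne'⟩
  rw [Fintype.linearIndependent_iff] at hv ⊢
  intro a ha i
  set b : ι → ZMod D := fun i => ((a i).val : ZMod D)
  have hb : ∀ i, ZMod.castHom hp (ZMod p) (b i) = a i := fun i => by
    simp only [b, map_natCast, ZMod.natCast_zmod_val]
  have hsum : ∑ i, (((D / p : ℕ) : ZMod D) * b i) • v i = 0 := by
    funext j
    have hj := congrFun ha j
    simp only [Finset.sum_apply, Pi.smul_apply, smul_eq_mul, Function.comp_apply,
      Pi.zero_apply] at hj ⊢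
    simp_rw [mul_assoc, ← Finset.mul_sum]
    rw [ZMod.natCast_div_mul_eq_zero_iff_s7, map_sum]
    simpa only [map_mul, hb] using hj
  rw [← hb, ← ZMod.natCast_div_mul_eq_zero_iff_s7]
  exact hv _ hsum i

theorem ZMod.isUnit_of_forall_prime_dvd {D : ℕ} [NeZero D] {x : ZMod D}
    (h : ∀ p (_ : p.Prime) (hp : p ∣ D), IsUnit (ZMod.castHom hp (ZMod p) x)) : IsUnit x := by
  rw [← ZMod.natCast_zmod_val x, ZMod.isUnit_iff_coprime]
  refine Nat.coprime_of_dvd fun p hp hpx hpD => ?_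
  have hx := h p hp hpD
  rw [← ZMod.natCast_zmod_val x, map_natCast, (ZMod.natCast_eq_zero_iff _ _).mpr hpx] at hx
  have : Fact p.Prime := ⟨hp⟩
  exact not_isUnit_zero hx

theorem ZMod.exists_castHom_eq {D : ℕ} [NeZero D] (f : ∀ p, p.Prime → p ∣ D → ZMod p) :
    ∃ y : ZMod D,
      ∀ p (hp : p.Prime) (hpD : p ∣ D), ZMod.castHom hpD (ZMod p) y = f p hp hpD := by
  classical
  let a : ℕ → ℕ := fun p => if h : p.Prime ∧ p ∣ D then (f p h.1 h.2).val else 0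
  obtain ⟨y, hy⟩ := Nat.chineseRemainderOfFinset a id D.primeFactors
    (fun p hp => (Nat.prime_of_mem_primeFactors hp).ne_zero)
    (fun p hp q hq hpq => (Nat.coprime_primes (Nat.prime_of_mem_primeFactors hp)
      (Nat.prime_of_mem_primeFactors hq)).mpr hpq)
  refine ⟨y, fun p hp hpD => ?_⟩
  have : NeZero p := ⟨hp.ne_zero⟩
  rw [map_natCast, (ZMod.natCast_eq_natCast_iff _ _ _).mpr
    (hy p (Nat.mem_primeFactors.mpr ⟨hp, hpD, NeZero.ne D⟩))]
  simp only [a, id, dif_pos (And.intro hp hpD), ZMod.natCast_zmod_val]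

theorem exists_linearIndependent_extension_fin {K V : Type*} [DivisionRing K]
    [AddCommGroup V] [Module K V] {k : ℕ} {u : Fin k → V} (hu : LinearIndependent K u) :
    ∀ n (hk : k ≤ n), n ≤ Module.finrank K V →
      ∃ w : Fin n → V, LinearIndependent K w ∧ ∀ i, w (Fin.castLE hk i) = u i := by
  refine Nat.le_induction (fun _ => ⟨u, hu, fun _ => rfl⟩) fun n hkn ih hn => ?_
  obtain ⟨w, hw, hwu⟩ := ih (by omega)
  obtain ⟨x, hx⟩ := exists_linearIndependent_snoc_of_lt_finrank hw hn
  exact ⟨Fin.snoc w x, hx, fun i => (Fin.snoc_castSucc (α := fun _ => V) ..).trans (hwu i)⟩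

section ModPrimes

variable {ι σ : Type*} {D : ℕ}

def LinearIndependentModPrimes (w : ι → σ → ZMod D) : Prop :=
  ∀ p (_ : p.Prime) (hp : p ∣ D),
    LinearIndependent (ZMod p) fun i => ZMod.castHom hp (ZMod p) ∘ w i

theorem LinearIndependent.linearIndependentModPrimes [Fintype ι] [NeZero D]
    {v : ι → σ → ZMod D} (hv : LinearIndependent (ZMod D) v) : LinearIndependentModPrimes v :=
  fun _ _ hp => hv.castHom_comp hp

theorem LinearIndependentModPrimes.exists_extension [NeZero D] {k n : ℕ} (hk : k ≤ n)
    {v : Fin k → Fin n → ZMod D} (hv : LinearIndependentModPrimes v) :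
    ∃ w : Fin n → Fin n → ZMod D,
      LinearIndependentModPrimes w ∧ ∀ i, w (Fin.castLE hk i) = v i := by
  have hext : ∀ p (hp : p.Prime) (hpD : p ∣ D), ∃ u : Fin n → Fin n → ZMod p,
      LinearIndependent (ZMod p) u ∧
        ∀ i, u (Fin.castLE hk i) = ZMod.castHom hpD (ZMod p) ∘ v i :=
    fun p hp hpD =>
      have : Fact p.Prime := ⟨hp⟩
      exists_linearIndependent_extension_fin (hv p hp hpD) n hk (by simp)
  choose u hu hux using hext
  choose w hw using fun i j => ZMod.exists_castHom_eq fun p hp hpD => u p hp hpD i j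
  refine ⟨fun i => if h : (i : ℕ) < k then v ⟨i, h⟩ else w i, fun p hp hpD => ?_,
    fun i => by simp⟩
  convert hu p hp hpD using 1
  funext i
  dsimp only
  split_ifs with h
  · exact (hux p hp hpD ⟨i, h⟩).symm
  · exact funext fun j => hw i j p hp hpD

theorem LinearIndependentModPrimes.isUnit [NeZero D] [Fintype ι] [DecidableEq ι]
    {w : ι → ι → ZMod D} (hw : LinearIndependentModPrimes w) : IsUnit (Matrix.of w) := by
  rw [Matrix.isUnit_iff_isUnit_det]
  refine ZMod.isUnit_of_forall_prime_dvd fun p hp hpD => ?_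
  have : Fact p.Prime := ⟨hp⟩
  rw [RingHom.map_det, ← Matrix.isUnit_iff_isUnit_det,
    ← Matrix.linearIndependent_rows_iff_isUnit]
  exact hw p hp hpD

end ModPrimes

theorem Matrix.span_row_eq_top_of_isUnit {R ι : Type*} [CommRing R] [Fintype ι] [DecidableEq ι]
    {A : Matrix ι ι R} (hA : IsUnit A) : Submodule.span R (Set.range A.row) = ⊤ := by
  rw [← range_vecMulLinear, LinearMap.range_eq_top]
  exact Matrix.vecMul_surjective_iff_isUnit.mpr hA

/-- Any linearly independent family of `k ≤ n` vectors in `(ZMod D)^n` extends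
to a family of `n` vectors forming a basis of `(ZMod D)^n`. -/
theorem stmt7 (D n k : ℕ) (hD : 2 ≤ D) (hk : k ≤ n)
    (v : Fin k → Fin n → ZMod D)
    (hv : ∀ a : Fin k → ZMod D, ∑ i, a i • v i = 0 → a = 0) :
    ∃ w : Fin n → Fin n → ZMod D,
      (∀ i : Fin k, w (Fin.castLE hk i) = v i) ∧
      (∀ a : Fin n → ZMod D, ∑ i, a i • w i = 0 → a = 0) ∧
      Submodule.span (ZMod D) (Set.range w) = ⊤ := by
  have : NeZero D := ⟨by omega⟩
  have hv : LinearIndependent (ZMod D) v :=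
    Fintype.linearIndependent_iff.mpr fun a ha => congrFun (hv a ha)
  obtain ⟨w, hw, hwv⟩ := hv.linearIndependentModPrimes.exists_extension hk
  have hunit : IsUnit (Matrix.of w) := hw.isUnit
  have hli : LinearIndependent (ZMod D) w := Matrix.linearIndependent_rows_of_isUnit hunit
  have hsp : Submodule.span (ZMod D) (Set.range w) = ⊤ := Matrix.span_row_eq_top_of_isUnit hunit
  refine ⟨w, hwv, fun a ha => funext fun i => ?_, hsp⟩
  exact Fintype.linearIndependent_iff.mp hli a ha i
end

section
/- If V is a submodule of (Z/DZ)^n that is freely generated by a linearly independent family of d vectors, then its orthogonal complement V^⊥ = {w ∈ (Z/DZ)^n : ⟨w, v⟩ = 0 for all v ∈ V} (with respect to the standard bilinear form) is also freely generated by a linearly independent family, of cardinality n − d. -/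
/-!
Lift the generators `v i` to `ℤ^n` and put the lattice they span in Smith normal form: in a
suitable basis `bM` of `ℤ^n` it is spanned by vectors `a i • bM (f i)`, `i < r`, with `r ≤ d`.
Reducing mod `D`, `span v` lies in the span of the `r` basis vectors `bM (f i)`, which has
`D ^ r` elements, while `span v` has `D ^ d`; hence `r = d` and `span v` is spanned by part of a
basis of `(ZMod D)^n`. The orthogonal of that part is spanned by the complementary part of the
dual basis.
-/

open Module Submodule Set

theorem LinearIndependent.natCard_span {ι R M : Type*} [Fintype ι] [Ring R] [AddCommGroup M]
    [Module R M] {v : ι → M} (hv : LinearIndependent R v) :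
    Nat.card (span R (range v)) = Nat.card R ^ Fintype.card ι := by
  rw [Nat.card_congr (Basis.span hv).equivFun.toEquiv, Nat.card_fun,
    Nat.card_eq_fintype_card (α := ι)]

theorem Module.Basis.exists_basis_map_algebraMap {ι κ S R : Type*} [Fintype ι] [DecidableEq ι]
    [CommSemiring S] [CommSemiring R] [Algebra S R] (b : Basis κ S (ι → S)) :
    ∃ b' : Basis κ R (ι → R), ∀ j, b' j = algebraMap S R ∘ b j :=
  ⟨(b.baseChange R).map (TensorProduct.piScalarRight S R R ι), fun j => by
    ext i; simp [Algebra.smul_def]⟩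

theorem Function.Embedding.exists_finSumEquiv_inl {d n : ℕ} (f : Fin d ↪ Fin n) :
    ∃ e : Fin d ⊕ Fin (n - d) ≃ Fin n, ∀ i, e (Sum.inl i) = f i := by
  classical
  have hcard : Fintype.card ↥(range f)ᶜ = n - d := by
    rw [Fintype.card_compl_set, Set.card_range_of_injective f.injective, Fintype.card_fin,
      Fintype.card_fin]
  let e₁ := Equiv.ofInjective f f.injective
  let e₂ := (Fintype.equivFinOfCardEq hcard).symm
  exact ⟨(Equiv.sumCongr e₁ e₂).trans (Equiv.Set.sumCompl (range f)), fun i => rfl⟩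

theorem ZMod.exists_basis_span_inl_eq {D : ℕ} (hD : 2 ≤ D) {d n : ℕ}
    (v : Fin d → Fin n → ZMod D) (hv : LinearIndependent (ZMod D) v) :
    ∃ b : Basis (Fin d ⊕ Fin (n - d)) (ZMod D) (Fin n → ZMod D),
      span (ZMod D) (range (b ∘ Sum.inl)) = span (ZMod D) (range v) := by
  have : NeZero D := ⟨by omega⟩
  let π : (Fin n → ℤ) →ₗ[ℤ] Fin n → ZMod D :=
    (Int.castAddHom (ZMod D)).toIntLinearMap.compLeft (Fin n)
  let vℤ : Fin d → Fin n → ℤ := fun i k => (v i k).val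
  have hπvℤ (i : Fin d) : π (vℤ i) = v i := by ext k; simp [π, vℤ]
  obtain ⟨r, snf⟩ := (span ℤ (range vℤ)).smithNormalForm (Pi.basisFun ℤ (Fin n))
  obtain ⟨b, hb⟩ := snf.bM.exists_basis_map_algebraMap (R := ZMod D)
  set U := span (ZMod D) (range (b ∘ snf.f))
  have hπN (y : span ℤ (range vℤ)) : π y ∈ U := by
    rw [← snf.bN.sum_repr y]
    simp only [coe_sum, coe_smul, snf.snf, map_sum, map_zsmul]
    refine sum_mem fun j _ => zsmul_mem (zsmul_mem ?_ _) _
    have hπb : π (snf.bM (snf.f j)) = (b ∘ snf.f) j := by ext; simp [hb, π]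
    exact hπb ▸ subset_span (mem_range_self j)
  have hVU : span (ZMod D) (range v) ≤ U := by
    rw [span_le]
    rintro _ ⟨i, rfl⟩
    rw [← hπvℤ]
    exact hπN ⟨vℤ i, subset_span ⟨i, rfl⟩⟩
  have hcardV : Nat.card (span (ZMod D) (range v)) = D ^ d := by simpa using hv.natCard_span
  have hcardU : Nat.card U = D ^ r := by
    simpa using (b.linearIndependent.comp _ snf.f.injective).natCard_span
  have hrd : r ≤ d := by
    have := finrank_range_le_card (R := ℤ) vℤ
    rwa [Set.finrank, finrank_eq_card_basis snf.bN, Fintype.card_fin, Fintype.card_fin] at this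
  have hdr : d ≤ r := by
    have := Nat.card_mono (Set.toFinite _) hVU
    simp only [SetLike.coe_sort_coe, hcardV, hcardU] at this
    exact (Nat.pow_le_pow_iff_right (by omega)).mp this
  obtain rfl : r = d := le_antisymm hrd hdr
  obtain ⟨e, he⟩ := snf.f.exists_finSumEquiv_inl
  refine ⟨b.reindex e.symm, ?_⟩
  have hinl : ⇑(b.reindex e.symm) ∘ Sum.inl = b ∘ snf.f := by ext1 i; simp [he]
  rw [hinl]
  exact (SetLike.coe_injective <|
    Set.Finite.eq_of_subset_of_card_le (Set.toFinite _) hVU (by simp [hcardV, hcardU])).symm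

section DotProduct

variable {R n : Type*} [CommRing R] [Fintype n]

theorem forall_mem_span_dotProduct_eq_zero_iff {u : n → R} {s : Set (n → R)} :
    (∀ x ∈ span R s, u ⬝ᵥ x = 0) ↔ ∀ x ∈ s, u ⬝ᵥ x = 0 := by
  have h := span_le (p := LinearMap.ker (dotProductBilin R R u)) (s := s)
  simpa [SetLike.le_def, subset_def] using h

theorem Module.Basis.exists_linearIndependent_span_eq_orthogonal_inl {ι κ : Type*} [Finite ι]
    [Finite κ] (b : Basis (ι ⊕ κ) R (n → R)) :
    ∃ w : κ → n → R, LinearIndependent R w ∧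
      (span R (range w) : Set (n → R)) =
        {u | ∀ x ∈ span R (range (b ∘ Sum.inl)), u ⬝ᵥ x = 0} := by
  classical
  -- `piEquiv` identifies `w` with the functional `x ↦ x ⬝ᵥ w`
  let b' := b.dualBasis.map (piEquiv n R R).symm
  have hrepr (u : n → R) (j : ι ⊕ κ) : b'.repr u j = u ⬝ᵥ b j := by
    simp [b', piEquiv_apply_apply, dotProduct, mul_comm]
  refine ⟨b' ∘ Sum.inr, b'.linearIndependent.comp _ Sum.inr_injective, ?_⟩
  ext u
  simp only [range_comp, SetLike.mem_coe, b'.mem_span_image, mem_ofPred_eq,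
    forall_mem_span_dotProduct_eq_zero_iff, Finsupp.support_subset_iff, forall_mem_image]
  simp [hrepr]

end DotProduct

/-- If `V ⊆ (ZMod D)^n` is spanned by a linearly independent family of `d`
vectors, then its orthogonal complement (w.r.t. the standard bilinear form) is
spanned by a linearly independent family of `n - d` vectors. -/
theorem stmt9 (D n d : ℕ) (hD : 2 ≤ D)
    (v : Fin d → Fin n → ZMod D)
    (hv : ∀ a : Fin d → ZMod D, ∑ i, a i • v i = 0 → a = 0) :
    ∃ w : Fin (n - d) → Fin n → ZMod D,
      (∀ a : Fin (n - d) → ZMod D, ∑ i, a i • w i = 0 → a = 0) ∧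
      (Submodule.span (ZMod D) (Set.range w) : Set (Fin n → ZMod D)) =
        {u : Fin n → ZMod D |
          ∀ x ∈ Submodule.span (ZMod D) (Set.range v), ∑ i, u i * x i = 0} := by
  have hv' : LinearIndependent (ZMod D) v :=
    Fintype.linearIndependent_iff.mpr fun a ha => congrFun (hv a ha)
  obtain ⟨b, hb⟩ := ZMod.exists_basis_span_inl_eq hD v hv'
  obtain ⟨w, hw, hspan⟩ := b.exists_linearIndependent_span_eq_orthogonal_inl
  refine ⟨w, fun a ha => funext (Fintype.linearIndependent_iff.mp hw a ha), ?_⟩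
  rw [hspan, hb]
  rfl
end

section
/- Let x, y ∈ (Z/DZ)^{2n}. There exists a matrix M over Z/DZ with M^T Ω M = Ω (where Ω = [[0, I], [−I, 0]]) such that x = M y, if and only if gcd(x) = gcd(y), where gcd(v) denotes the greatest divisor d of D with (D/d)·v = 0. -/
/-!
Symplectic matrices are invertible, so they preserve the ideal spanned by the coordinates of a
vector; in `ZMod D` this ideal is generated by `gcd(v)`, and a divisor of `D` is determined by the
ideal it generates. Conversely, `ZMod D` is a Hermite ring, being a quotient of `ℤ`: every pair
`(a, b)` is sent to `(·, 0)` by `SL₂`. Doing this on the `n` pairs `(vᵢ, vₙ₊ᵢ)` at once clears the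
second half of `v`; a symmetric shear and a second pairwise reduction put a Bézout combination `g`
of the coordinates in position `i₀`; a shear in `GLₙ ⊆ Sp₂ₙ` then clears the other coordinates.
So every `v` is symplectically equivalent to `(gcd(v) • e_{i₀}, 0)`.
-/

open Matrix Set

/-- Kaplansky's Hermite property, in the form: every pair `(a, b)` is sent to `(·, 0)` by a
matrix of `SL₂(R)`. -/
def IsHermiteRing (R : Type*) [CommRing R] : Prop :=
  ∀ a b : R, ∃ p q r s : R, p * s - q * r = 1 ∧ r * a + s * b = 0

namespace IsHermiteRing

theorem int : IsHermiteRing ℤ := by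
  intro a b
  rcases (Int.gcd a b).eq_zero_or_pos with h | h
  · obtain ⟨rfl, rfl⟩ := Int.gcd_eq_zero_iff.mp h
    exact ⟨1, 0, 0, 1, by ring, by ring⟩
  · obtain ⟨g, a', b', -, hab, rfl, rfl⟩ := Int.exists_gcd_one' h
    obtain ⟨u, v, huv⟩ := Int.isCoprime_iff_gcd_eq_one.mpr hab
    exact ⟨u, v, -b', a', by linear_combination huv, by ring⟩

theorem of_surjective {R S : Type*} [CommRing R] [CommRing S] (hR : IsHermiteRing R)
    (f : R →+* S) (hf : Function.Surjective f) : IsHermiteRing S := by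
  intro a b
  obtain ⟨a, rfl⟩ := hf a
  obtain ⟨b, rfl⟩ := hf b
  obtain ⟨p, q, r, s, hdet, hann⟩ := hR a b
  refine ⟨f p, f q, f r, f s, ?_, ?_⟩
  · rw [← map_mul, ← map_mul, ← map_sub, hdet, map_one]
  · rw [← map_mul, ← map_mul, ← map_add, hann, map_zero]

theorem zmod (D : ℕ) : IsHermiteRing (ZMod D) :=
  int.of_surjective (Int.castRingHom _) ZMod.intCast_surjective

end IsHermiteRing

namespace Ideal

variable {m n R : Type*} [Fintype n] [CommSemiring R]

theorem span_range_mulVec_le (M : Matrix m n R) (v : n → R) :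
    span (range (M *ᵥ v)) ≤ span (range v) :=
  span_le.mpr <| range_subset_iff.mpr fun _ =>
    sum_mem _ fun j _ => mul_mem_left _ _ (subset_span ⟨j, rfl⟩)

theorem span_range_mulVec_of_isUnit [DecidableEq n] {M : Matrix n n R} (hM : IsUnit M)
    (v : n → R) : span (range (M *ᵥ v)) = span (range v) := by
  obtain ⟨N, hNM⟩ := hM.exists_left_inv
  refine le_antisymm (span_range_mulVec_le M v) ?_
  calc span (range v) = span (range (N *ᵥ (M *ᵥ v))) := by
        rw [mulVec_mulVec, hNM, one_mulVec]
    _ ≤ span (range (M *ᵥ v)) := span_range_mulVec_le N _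

theorem span_range_sumElim_zero {l : Type*} (c : l → R) :
    span (range (Sum.elim c (0 : l → R))) = span (range c) := by
  rw [Set.Sum.elim_range, span_union, (span_eq_bot (s := range (0 : l → R))).mpr, sup_bot_eq]
  rintro _ ⟨_, rfl⟩
  rfl

end Ideal

namespace SymplecticGroup

variable {l R : Type*} [Fintype l] [DecidableEq l] [CommRing R]

theorem transpose_mul_fromBlocks_mul_eq_iff_mem {M : Matrix (l ⊕ l) (l ⊕ l) R} :
    Mᵀ * fromBlocks 0 1 (-1) 0 * M = fromBlocks 0 1 (-1) 0 ↔ M ∈ symplecticGroup l R := by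
  have hJ : (fromBlocks 0 1 (-1) 0 : Matrix (l ⊕ l) (l ⊕ l) R) = -J l R := by
    simp [J, fromBlocks_neg]
  rw [hJ, mem_iff', Matrix.mul_neg, Matrix.neg_mul, neg_inj]

theorem inv_mem {M : Matrix (l ⊕ l) (l ⊕ l) R} (hM : M ∈ symplecticGroup l R) :
    M⁻¹ ∈ symplecticGroup l R := by
  simpa [coe_inv'] using (⟨M, hM⟩⁻¹ : symplecticGroup l R).2

theorem span_range_mulVec {M : Matrix (l ⊕ l) (l ⊕ l) R} (hM : M ∈ symplecticGroup l R)
    (v : l ⊕ l → R) : Ideal.span (range (M *ᵥ v)) = Ideal.span (range v) :=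
  Ideal.span_range_mulVec_of_isUnit ((isUnit_iff_isUnit_det M).mpr (symplectic_det hM)) v

theorem fromBlocks_diagonal_mem {p q r s : l → R} (h : ∀ i, p i * s i - q i * r i = 1) :
    fromBlocks (diagonal p) (diagonal q) (diagonal r) (diagonal s) ∈ symplecticGroup l R := by
  simp only [fromBlocks_mem_iff, diagonal_transpose, diagonal_mul_diagonal, mul_comm,
    diagonal_sub, diagonal_eq_one, true_and]
  exact funext h

theorem fromBlocks_one_zero_mem {S : Matrix l l R} (hS : Sᵀ = S) :
    fromBlocks 1 0 S 1 ∈ symplecticGroup l R := by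
  simp [fromBlocks_mem_iff, hS]

theorem fromBlocks_zero_zero_transpose_mem {A B : Matrix l l R} (h : A * B = 1) :
    fromBlocks A 0 0 Bᵀ ∈ symplecticGroup l R := by
  simp [fromBlocks_mem_iff, ← transpose_mul, mul_eq_one_comm.mp h]

theorem exists_mem_mulVec_sumElim_eq_sumElim_zero {a b : l → R} (P : l → R → Prop)
    (h : ∀ i, ∃ p q r s : R,
      p * s - q * r = 1 ∧ r * a i + s * b i = 0 ∧ P i (p * a i + q * b i)) :
    ∃ M ∈ symplecticGroup l R, ∃ c : l → R, M *ᵥ Sum.elim a b = Sum.elim c 0 ∧ ∀ i, P i (c i) := by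
  choose p q r s hdet hann hP using h
  refine ⟨_, fromBlocks_diagonal_mem hdet, p * a + q * b, ?_, hP⟩
  rw [fromBlocks_mulVec]
  ext (i | i) <;> simp [mulVec_diagonal, hann]

theorem exists_mem_mulVec_sumElim_eq_single (i₀ : l) {c : l → R} (hc : ∀ j, c i₀ ∣ c j) :
    ∃ M ∈ symplecticGroup l R, M *ᵥ Sum.elim c 0 = Sum.elim (Pi.single i₀ (c i₀)) 0 := by
  choose w hw using hc
  set N := vecMulVec (Function.update w i₀ 0) (Pi.single i₀ 1)
  have hNN : N * N = 0 := by simp [N, vecMulVec_mul_vecMulVec]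
  have hAB : (1 - N) * (1 + N) = 1 := by
    rw [sub_mul, one_mul, mul_add, mul_one, hNN]
    abel
  refine ⟨_, fromBlocks_zero_zero_transpose_mem hAB, ?_⟩
  rw [fromBlocks_mulVec]
  ext (j | j)
  · by_cases hj : j = i₀
    · subst hj
      simp [N, sub_mulVec, vecMulVec_mulVec]
    · simp [N, sub_mulVec, vecMulVec_mulVec, hj, hw j, mul_comm]
  · simp

end SymplecticGroup

namespace IsHermiteRing

open SymplecticGroup

variable {l R : Type*} [Fintype l] [DecidableEq l] [CommRing R]

theorem exists_mem_symplecticGroup_mulVec_eq_sumElim_zero (hR : IsHermiteRing R)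
    (v : l ⊕ l → R) :
    ∃ M ∈ symplecticGroup l R, ∃ c : l → R, M *ᵥ v = Sum.elim c 0 := by
  obtain ⟨M, hM, c, hc, -⟩ := exists_mem_mulVec_sumElim_eq_sumElim_zero (a := v ∘ Sum.inl)
    (b := v ∘ Sum.inr) (fun _ _ => True) fun i =>
      let ⟨p, q, r, s, hdet, hann⟩ := hR (v (Sum.inl i)) (v (Sum.inr i))
      ⟨p, q, r, s, hdet, hann, trivial⟩
  exact ⟨M, hM, c, by rwa [Sum.elim_comp_inl_inr] at hc⟩

/-- The shear by the symmetric matrix `e tᵀ + t eᵀ` (with `e = Pi.single i₀ 1`) puts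
`g + c i₀ * t i₀` opposite `c i₀ = g * k`, and `!![-t i₀, 1; -1 - t i₀ * k, k] ∈ SL₂(R)` sends
this pair to `(g, 0)`. -/
theorem exists_mem_symplecticGroup_pivot (hR : IsHermiteRing R) (i₀ : l) {c t : l → R} {g : R}
    (htc : t ⬝ᵥ c = g) (hg : g ∣ c i₀) :
    ∃ M ∈ symplecticGroup l R, ∃ c' : l → R,
      M *ᵥ Sum.elim c 0 = Sum.elim c' 0 ∧ c' i₀ = g := by
  obtain ⟨k, hk⟩ := hg
  set S := vecMulVec (Pi.single i₀ 1) t + vecMulVec t (Pi.single i₀ 1)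
  have hS : Sᵀ = S := by simp [S, add_comm]
  have hSc : S *ᵥ c = g • Pi.single i₀ 1 + c i₀ • t := by
    simp [S, add_mulVec, vecMulVec_mulVec, htc]
  have hSc₀ : (S *ᵥ c) i₀ = g + c i₀ * t i₀ := by simp [hSc]
  obtain ⟨M, hM, c', hc', hc'₀⟩ := exists_mem_mulVec_sumElim_eq_sumElim_zero (a := c)
    (b := S *ᵥ c) (fun i x => i = i₀ → x = g) fun i => by
      by_cases hi : i = i₀
      · subst hi
        refine ⟨-t i, 1, -1 - t i * k, k, by ring, ?_, fun _ => ?_⟩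
        · rw [hSc₀, hk]; ring
        · rw [hSc₀]; ring
      · obtain ⟨p, q, r, s, hdet, hann⟩ := hR (c i) ((S *ᵥ c) i)
        exact ⟨p, q, r, s, hdet, hann, fun h => absurd h hi⟩
  refine ⟨M * fromBlocks 1 0 S 1, mul_mem hM (fromBlocks_one_zero_mem hS), c', ?_, hc'₀ i₀ rfl⟩
  rw [← mulVec_mulVec, ← hc', fromBlocks_mulVec]
  simp

theorem exists_mem_symplecticGroup_mulVec_eq_single (hR : IsHermiteRing R) (i₀ : l)
    {v : l ⊕ l → R} {g : R} (hv : Ideal.span (range v) = Ideal.span {g}) :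
    ∃ M ∈ symplecticGroup l R, M *ᵥ v = Sum.elim (Pi.single i₀ g) 0 := by
  obtain ⟨M₁, hM₁, c, hc⟩ := hR.exists_mem_symplecticGroup_mulVec_eq_sumElim_zero v
  have hc_span : Ideal.span (range c) = Ideal.span {g} := by
    rw [← Ideal.span_range_sumElim_zero, ← hc, span_range_mulVec hM₁, hv]
  obtain ⟨t, ht⟩ := (Submodule.mem_span_range_iff_exists_fun R).mp
    (hc_span ▸ Ideal.mem_span_singleton_self g)
  obtain ⟨M₂, hM₂, c', hc', hc'₀⟩ := hR.exists_mem_symplecticGroup_pivot i₀ (t := t)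
    (by simpa [dotProduct] using ht)
    (Ideal.mem_span_singleton.mp (hc_span ▸ Ideal.subset_span (mem_range_self i₀)))
  have hc'_span : Ideal.span (range c') = Ideal.span {g} := by
    rw [← Ideal.span_range_sumElim_zero, ← hc', span_range_mulVec hM₂,
      Ideal.span_range_sumElim_zero, hc_span]
  obtain ⟨M₃, hM₃, hM₃c'⟩ := exists_mem_mulVec_sumElim_eq_single i₀ (c := c') fun j =>
    hc'₀ ▸ Ideal.mem_span_singleton.mp (hc'_span ▸ Ideal.subset_span (mem_range_self j))
  refine ⟨M₃ * M₂ * M₁, mul_mem (mul_mem hM₃ hM₂) hM₁, ?_⟩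
  rw [← mulVec_mulVec, ← mulVec_mulVec, hc, hc', hM₃c', hc'₀]

theorem exists_mem_symplecticGroup_mulVec_eq (hR : IsHermiteRing R) {v w : l ⊕ l → R} {g : R}
    (hv : Ideal.span (range v) = Ideal.span {g}) (hw : Ideal.span (range w) = Ideal.span {g}) :
    ∃ M ∈ symplecticGroup l R, M *ᵥ w = v := by
  cases isEmpty_or_nonempty l with
  | inl _ => exact ⟨1, one_mem _, Subsingleton.elim _ _⟩
  | inr hl =>
    obtain ⟨i₀⟩ := hl
    obtain ⟨Mv, hMv, hMv_v⟩ := hR.exists_mem_symplecticGroup_mulVec_eq_single i₀ hv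
    obtain ⟨Mw, hMw, hMw_w⟩ := hR.exists_mem_symplecticGroup_mulVec_eq_single i₀ hw
    refine ⟨Mv⁻¹ * Mw, mul_mem (inv_mem hMv) hMw, ?_⟩
    rw [← mulVec_mulVec, hMw_w, ← hMv_v, mulVec_mulVec, nonsing_inv_mul _ (symplectic_det hMv),
      one_mulVec]

end IsHermiteRing

theorem Int.natCast_finset_gcd {ι : Type*} (s : Finset ι) (f : ι → ℕ) :
    ((s.gcd f : ℕ) : ℤ) = s.gcd fun i => (f i : ℤ) := by
  classical
  induction s using Finset.induction_on with
  | empty => simp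
  | insert a s _ ih =>
    rw [Finset.gcd_insert, Finset.gcd_insert, ← ih, ← Int.coe_gcd, Int.gcd_natCast_natCast]
    rfl

namespace ZMod

variable {D : ℕ}

def content {ι : Type*} [Fintype ι] (v : ι → ZMod D) : ℕ :=
  Nat.gcd (Finset.univ.gcd fun i => (v i).val) D

theorem content_dvd {ι : Type*} [Fintype ι] (v : ι → ZMod D) : content v ∣ D :=
  Nat.gcd_dvd_right _ _

variable [NeZero D]

theorem natCast_dvd_iff_dvd_val {d : ℕ} (hd : d ∣ D) {a : ZMod D} :
    (d : ZMod D) ∣ a ↔ d ∣ a.val := by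
  constructor
  · rintro ⟨c, rfl⟩
    rw [val_mul, val_natCast, Nat.dvd_mod_iff hd]
    exact ((Nat.dvd_mod_iff hd).mpr dvd_rfl).mul_right _
  · rintro ⟨k, hk⟩
    exact ⟨k, by rw [← natCast_zmod_val a, hk, Nat.cast_mul]⟩

theorem natCast_dvd_natCast_iff {d e : ℕ} (hd : d ∣ D) : (d : ZMod D) ∣ e ↔ d ∣ e := by
  rw [natCast_dvd_iff_dvd_val hd, val_natCast, Nat.dvd_mod_iff hd]

variable {ι : Type*} [Fintype ι]

theorem content_mem_span_range (v : ι → ZMod D) :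
    (content v : ZMod D) ∈ Ideal.span (range v) := by
  obtain ⟨w, hw⟩ := Finset.gcd_eq_sum_mul Finset.univ fun i => ((v i).val : ℤ)
  have hbezout := congrArg (Int.cast : ℤ → ZMod D)
    (Nat.gcd_eq_gcd_ab (Finset.univ.gcd fun i => (v i).val) D)
  rw [Int.natCast_finset_gcd, hw] at hbezout
  push_cast [natCast_self, natCast_zmod_val, Finset.sum_mul, zero_mul, add_zero] at hbezout
  rw [content, hbezout]
  exact Ideal.sum_mem _ fun i _ =>
    Ideal.mul_mem_right _ _ (Ideal.mul_mem_right _ _ (Ideal.subset_span (mem_range_self i)))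

theorem span_range_eq_span_content (v : ι → ZMod D) :
    Ideal.span (range v) = Ideal.span {(content v : ZMod D)} := by
  refine le_antisymm (Ideal.span_le.mpr <| range_subset_iff.mpr fun i => ?_)
    (Ideal.span_singleton_le_iff_mem _ |>.mpr (content_mem_span_range v))
  refine Ideal.mem_span_singleton.mpr ((natCast_dvd_iff_dvd_val (content_dvd v)).mpr ?_)
  exact (Nat.gcd_dvd_left _ _).trans (Finset.gcd_dvd (Finset.mem_univ i))

theorem content_eq_content_iff {κ : Type*} [Fintype κ] {v : ι → ZMod D} {w : κ → ZMod D} :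
    content v = content w ↔ Ideal.span (range v) = Ideal.span (range w) := by
  rw [span_range_eq_span_content, span_range_eq_span_content]
  refine ⟨fun h => h ▸ rfl, fun h => Nat.dvd_antisymm ?_ ?_⟩
  · exact (natCast_dvd_natCast_iff (content_dvd v)).mp
      (Ideal.span_singleton_le_span_singleton.mp h.ge)
  · exact (natCast_dvd_natCast_iff (content_dvd w)).mp
      (Ideal.span_singleton_le_span_singleton.mp h.le)

end ZMod

/-- Two vectors of `(ZMod D)^{2n}` are related by a symplectic matrix iff they
have the same gcd (of their integer representatives together with `D`). -/
theorem stmt14 (D n : ℕ) (hD : 2 ≤ D) (x y : Fin n ⊕ Fin n → ZMod D) :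
    (∃ M : Matrix (Fin n ⊕ Fin n) (Fin n ⊕ Fin n) (ZMod D),
        Mᵀ * Matrix.fromBlocks 0 1 (-1) 0 * M = Matrix.fromBlocks 0 1 (-1) 0 ∧
        M.mulVec y = x) ↔
    Nat.gcd (Finset.univ.gcd fun i => (x i).val) D =
      Nat.gcd (Finset.univ.gcd fun i => (y i).val) D := by
  have : NeZero D := ⟨by omega⟩
  change _ ↔ ZMod.content x = ZMod.content y
  simp_rw [SymplecticGroup.transpose_mul_fromBlocks_mul_eq_iff_mem, ZMod.content_eq_content_iff]
  constructor
  · rintro ⟨M, hM, rfl⟩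
    exact SymplecticGroup.span_range_mulVec hM y
  · intro h
    refine (IsHermiteRing.zmod D).exists_mem_symplecticGroup_mulVec_eq
      (ZMod.span_range_eq_span_content x) ?_
    rw [← h, ZMod.span_range_eq_span_content]
end
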